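/- arXiv:1906.09493 — 2 statements merged into one kernel-verified Lean document; each statement's English description precedes it below -/
import Mathlib

section
/- There exists an absolute constant C > 0 such that for every prime p, every nontrivial Dirichlet character χ modulo p, and all units a, a′ ∈ (ZMod p)ˣ with a ≠ a′, the correlation sum satisfies |Σ_{u ∈ ZMod p} S(a,u) · conj(S(a′,u))| ≤ C · p^{3/2}, where S(a,u) = Σ_{b ∈ ZMod p, b ≠ u} χ(b) · e_p(a · (u − b)⁻¹). -/
/-- The standard additive character `e_p(x) = exp(2πi·x̃/p)` on `ZMod p`,
where `x̃ ∈ {0, …, p-1}` is the canonical representative of `x`. -/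
noncomputable def eZMod (p : ℕ) (x : ZMod p) : ℂ :=
  Complex.exp (2 * Real.pi * Complex.I * (x.val : ℂ) / (p : ℂ))

/-- The shifted character sum `S(a,u) = Σ_{b ≠ u} χ(b) · e_p(a · (u − b)⁻¹)`. -/
noncomputable def Ssum (p : ℕ) [Fact p.Prime] (χ : DirichletCharacter ℂ p)
    (a : (ZMod p)ˣ) (u : ZMod p) : ℂ :=
  ∑ b ∈ Finset.univ.filter (fun b : ZMod p => b ≠ u),
    χ b * eZMod p ((a : ZMod p) * (u - b)⁻¹)

/-! Substituting `c = (u - b)⁻¹` gives `S(a,u) = Σ_{c ≠ 0} χ(u - c⁻¹) e_p(a c)`. Expanding the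
correlation, the sum over `u` is the autocorrelation of `χ` at the shift `c⁻¹ - c'⁻¹`, which is
`p - 1` on the diagonal `c = c'` and `-1` off it. What remains are complete additive character
sums, and the correlation is exactly `-p - 1`. -/

open Finset ComplexConjugate

section FiniteField

variable {F : Type*} [Field F] [Fintype F] [DecidableEq F]

namespace MulChar

variable {χ : MulChar F ℂ}

/-- For `u ≠ 0` the summand is `χ (1 + s u⁻¹)`, and `u ↦ 1 + s u⁻¹` permutes `F` when `s ≠ 0`. -/
theorem sum_add_mul_conj (hχ : χ ≠ 1) (s : F) :
    ∑ u, χ (u + s) * conj (χ u) = (if s = 0 then (Fintype.card F : ℂ) else 0) - 1 := by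
  have summand (u : F) :
      χ (u + s) * conj (χ u) = χ (1 + s * u⁻¹) - if u = 0 then 1 else 0 := by
    rw [starRingEnd_apply, star_apply', inv_apply', ← map_mul]
    rcases eq_or_ne u 0 with rfl | hu
    · simp
    · rw [if_neg hu, sub_zero, add_mul, mul_inv_cancel₀ hu, add_comm]
  rw [Fintype.sum_congr _ _ summand, sum_sub_distrib, sum_ite_eq' univ (0 : F),
    if_pos (mem_univ _)]
  congr 1
  split_ifs with hs
  · simp [hs]
  · have hbij : Function.Bijective fun u : F => 1 + s * u⁻¹ :=
      Finite.injective_iff_bijective.mp <|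
        (add_right_injective 1).comp ((mul_right_injective₀ hs).comp inv_injective)
    rw [Fintype.sum_bijective _ hbij _ χ fun _ => rfl, sum_eq_zero_of_ne_one hχ]

theorem sum_sub_mul_conj_sub (hχ : χ ≠ 1) (x y : F) :
    ∑ u, χ (u - x) * conj (χ (u - y)) = (if x = y then (Fintype.card F : ℂ) else 0) - 1 := by
  calc ∑ u, χ (u - x) * conj (χ (u - y))
      = ∑ w, χ (w + (y - x)) * conj (χ w) := by
        rw [← Equiv.sum_comp (Equiv.addRight y)]
        simp only [Equiv.coe_addRight, add_sub_cancel_right, add_sub_assoc']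
    _ = _ := by simp only [sum_add_mul_conj hχ, sub_eq_zero, eq_comm]

end MulChar

theorem AddChar.sum_erase_zero_mul {ψ : AddChar F ℂ} (hψ : ψ.IsPrimitive) {t : F} (ht : t ≠ 0) :
    ∑ c ∈ univ.erase 0, ψ (t * c) = -1 := by
  rw [sum_erase_eq_sub (mem_univ _)]
  simp_rw [mul_comm t]
  rw [AddChar.sum_mulShift t hψ, if_neg ht, zero_mul, AddChar.map_zero_eq_one, Nat.cast_zero,
    zero_sub]

/-- `S(a,u)` after the substitution `b = u - c⁻¹`. -/
noncomputable def invShiftSum (χ : MulChar F ℂ) (ψ : AddChar F ℂ) (a u : F) : ℂ :=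
  ∑ c ∈ univ.erase 0, χ (u - c⁻¹) * ψ (a * c)

theorem sum_invShiftSum_mul_conj {χ : MulChar F ℂ} (hχ : χ ≠ 1) {ψ : AddChar F ℂ}
    (hψ : ψ.IsPrimitive) {a a' : F} (ha : a ≠ 0) (ha' : a' ≠ 0) (h : a ≠ a') :
    ∑ u, invShiftSum χ ψ a u * conj (invShiftSum χ ψ a' u) = -(Fintype.card F : ℂ) - 1 := by
  set E : Finset F := univ.erase 0
  have diag (c : F) : ψ (a * c) * conj (ψ (a' * c)) = ψ ((a - a') * c) := by
    rw [sub_mul, sub_eq_add_neg, AddChar.map_add_eq_mul, AddChar.map_neg_eq_conj]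
  calc ∑ u, invShiftSum χ ψ a u * conj (invShiftSum χ ψ a' u)
      = ∑ c ∈ E, ∑ c' ∈ E, ψ (a * c) * conj (ψ (a' * c')) *
          ∑ u, χ (u - c⁻¹) * conj (χ (u - c'⁻¹)) := by
        simp_rw [invShiftSum, map_sum, sum_mul_sum, map_mul, mul_sum]
        rw [sum_comm]
        refine sum_congr rfl fun c _ => ?_
        rw [sum_comm]
        refine sum_congr rfl fun c' _ => sum_congr rfl fun u _ => by ring
    _ = ∑ c ∈ E, ∑ c' ∈ E, ψ (a * c) * conj (ψ (a' * c')) *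
          ((if c = c' then (Fintype.card F : ℂ) else 0) - 1) := by
        simp only [MulChar.sum_sub_mul_conj_sub hχ, inv_inj]
    _ = Fintype.card F * ∑ c ∈ E, ψ ((a - a') * c) -
          (∑ c ∈ E, ψ (a * c)) * conj (∑ c ∈ E, ψ (a' * c)) := by
        simp_rw [mul_sub, mul_one, mul_ite, mul_zero, sum_sub_distrib, sum_ite_eq, map_sum,
          sum_mul_sum, mul_sum, diag]
        exact congrArg (· - _) (sum_congr rfl fun c hc => by rw [if_pos hc, mul_comm])
    _ = -(Fintype.card F : ℂ) - 1 := by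
        rw [AddChar.sum_erase_zero_mul hψ (sub_ne_zero.mpr h), AddChar.sum_erase_zero_mul hψ ha,
          AddChar.sum_erase_zero_mul hψ ha']
        simp

end FiniteField

theorem eZMod_eq_stdAddChar {p : ℕ} [NeZero p] (x : ZMod p) : eZMod p x = ZMod.stdAddChar x := by
  rw [ZMod.stdAddChar_apply, ZMod.toCircle_apply]
  rfl

theorem Ssum_eq_invShiftSum {p : ℕ} [Fact p.Prime] (χ : DirichletCharacter ℂ p) (a : (ZMod p)ˣ)
    (u : ZMod p) : Ssum p χ a u = invShiftSum χ ZMod.stdAddChar a u := by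
  refine sum_nbij' (fun b => (u - b)⁻¹) (fun c => u - c⁻¹)
    (fun b hb => by simpa [sub_eq_zero, eq_comm] using hb) (fun c hc => by simpa using hc)
    (fun b _ => by simp) (fun c _ => by simp) (fun b _ => by simp [eZMod_eq_stdAddChar])

/-- The off-diagonal bound `𝓒̃ ≪ p^{3/2}`: there is an absolute constant `C > 0` such
that for all prime `p`, nontrivial `χ` mod `p` and distinct units `a ≠ a′`,
`|Σ_u S(a,u) · conj(S(a′,u))| ≤ C · p^{3/2}`. -/
theorem stmt_3 :
    ∃ C : ℝ, 0 < C ∧ ∀ (p : ℕ) (_ : Fact p.Prime)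
      (χ : DirichletCharacter ℂ p), χ ≠ 1 → ∀ (a a' : (ZMod p)ˣ), a ≠ a' →
      ‖∑ u : ZMod p, Ssum p χ a u * (starRingEnd ℂ) (Ssum p χ a' u)‖ ≤
        C * (p : ℝ) ^ ((3 : ℝ) / 2) := by
  refine ⟨2, two_pos, fun p _ χ hχ a a' h => ?_⟩
  have hp : (1 : ℝ) ≤ p := by exact_mod_cast (Fact.out : p.Prime).one_le
  have hsum : ∑ u : ZMod p, Ssum p χ a u * conj (Ssum p χ a' u) = -((p + 1 : ℝ) : ℂ) := by
    simp_rw [Ssum_eq_invShiftSum]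
    rw [sum_invShiftSum_mul_conj hχ (ZMod.isPrimitive_stdAddChar p) a.ne_zero a'.ne_zero
      (Units.val_injective.ne h), ZMod.card]
    push_cast
    ring
  calc ‖∑ u : ZMod p, Ssum p χ a u * conj (Ssum p χ a' u)‖
      = p + 1 := by rw [hsum, norm_neg, Complex.norm_real, Real.norm_of_nonneg (by positivity)]
    _ ≤ 2 * p := by linarith
    _ ≤ 2 * (p : ℝ) ^ ((3 : ℝ) / 2) := by
        gcongr
        exact Real.self_le_rpow_of_one_le hp (by norm_num)
end

section
/- There exists an absolute constant C > 0 such that for every prime p, every nontrivial Dirichlet character χ modulo p, and all units a, a′, c ∈ (ZMod p)ˣ, the twisted correlation sum satisfies |Σ_{u ∈ ZMod p} S(a,u) · conj(S(a′, c·u))| ≤ C · p², where S(a,u) = Σ_{b ∈ ZMod p, b ≠ u} χ(b) · e_p(a · (u − b)⁻¹). -/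
open Finset ComplexConjugate

lemma MulChar.norm_apply_le_one {R : Type*} [CommMonoid R] [Finite Rˣ] (χ : MulChar R ℂ)
    (a : R) : ‖χ a‖ ≤ 1 := by
  by_cases ha : IsUnit a
  · obtain ⟨u, rfl⟩ := ha
    refine le_of_eq <|
      (pow_eq_one_iff_of_nonneg (norm_nonneg _) (Nat.card_pos (α := Rˣ)).ne').mp ?_
    rw [← norm_pow, ← map_pow, ← Units.val_pow_eq_pow_val, pow_card_eq_one', Units.val_one,
      map_one, norm_one]
  · rw [χ.map_nonunit ha, norm_zero]
    exact zero_le_one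

section FiniteField

variable {F : Type*} [Field F] [Fintype F] {χ : MulChar F ℂ}

/-- Substituting `u = x - (x - y) v` turns the sum into `χ (-1) · J(χ, χ⁻¹)`. -/
theorem MulChar.sum_apply_sub_mul_conj_apply_sub (hχ : χ ≠ 1) {x y : F} (hxy : x ≠ y) :
    ∑ u, χ (u - x) * conj (χ (u - y)) = -1 := by
  have hd : x - y ≠ 0 := sub_ne_zero.mpr hxy
  have hunit : χ (x - y) * χ⁻¹ (x - y) = 1 := by
    rw [← MulChar.mul_apply, mul_inv_cancel, MulChar.one_apply (Ne.isUnit hd)]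
  calc ∑ u, χ (u - x) * conj (χ (u - y))
      = ∑ v, χ (-(x - y) * v) * χ⁻¹ ((x - y) * (1 - v)) := by
        have hd' : y - x ≠ 0 := sub_ne_zero.mpr hxy.symm
        refine Fintype.sum_equiv ((Equiv.subRight x).trans (Equiv.divRight₀ (y - x) hd')) _ _
          fun u => ?_
        have h₁ : -(x - y) * ((u - x) / (y - x)) = u - x := by field_simp; ring
        have h₂ : (x - y) * (1 - (u - x) / (y - x)) = u - y := by field_simp; ring
        simp only [Equiv.trans_apply, Equiv.subRight_apply, Equiv.divRight₀_apply, h₁, h₂,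
          starRingEnd_apply, MulChar.star_apply']
    _ = χ (-1) * jacobiSum χ χ⁻¹ := by
        rw [jacobiSum, mul_sum]
        refine sum_congr rfl fun v _ => ?_
        rw [neg_mul, ← neg_one_mul, map_mul, map_mul, map_mul]
        linear_combination (χ (-1) * χ v * χ⁻¹ (1 - v)) * hunit
    _ = -1 := by
        rw [jacobiSum_nontrivial_inv hχ, mul_neg, ← map_mul, neg_one_mul, neg_neg, map_one]

theorem MulChar.norm_sum_apply_sub_mul_conj_apply_mul_sub_le [DecidableEq F] (hχ : χ ≠ 1)
    {c : F} (hc : c ≠ 0) (x y : F) :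
    ‖∑ u, χ (u - x) * conj (χ (c * u - y))‖ ≤ if y = c * x then (Fintype.card F : ℝ) else 1 := by
  split_ifs with hdiag
  · calc ‖∑ u, χ (u - x) * conj (χ (c * u - y))‖
        ≤ ∑ u, ‖χ (u - x) * conj (χ (c * u - y))‖ := norm_sum_le _ _
      _ ≤ ∑ _u : F, (1 : ℝ) := by
        refine sum_le_sum fun u _ => ?_
        rw [norm_mul, RCLike.norm_conj]
        exact mul_le_one₀ (χ.norm_apply_le_one _) (norm_nonneg _) (χ.norm_apply_le_one _)
      _ = Fintype.card F := by simp
  · have hxy : x ≠ c⁻¹ * y := fun h => hdiag (by rw [h, mul_inv_cancel_left₀ hc])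
    have hscale : ∀ u, c * u - y = c * (u - c⁻¹ * y) := fun u => by
      rw [mul_sub, mul_inv_cancel_left₀ hc]
    simp_rw [hscale, map_mul, mul_left_comm _ (conj (χ c)), ← mul_sum,
      χ.sum_apply_sub_mul_conj_apply_sub hχ hxy, norm_mul, norm_neg, norm_one, mul_one,
      RCLike.norm_conj]
    exact χ.norm_apply_le_one c

theorem MulChar.norm_sum_mul_conj_le [DecidableEq F] (hχ : χ ≠ 1) {c : F} (hc : c ≠ 0)
    (f g : F → ℂ) (hf : ∀ x, ‖f x‖ ≤ 1) (hg : ∀ y, ‖g y‖ ≤ 1) :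
    ‖∑ u, (∑ x, χ (u - x) * f x) * conj (∑ y, χ (c * u - y) * g y)‖
      ≤ 2 * (Fintype.card F : ℝ) ^ 2 := by
  have hexpand : ∑ u, (∑ x, χ (u - x) * f x) * conj (∑ y, χ (c * u - y) * g y)
      = ∑ x, ∑ y, f x * conj (g y) * ∑ u, χ (u - x) * conj (χ (c * u - y)) := by
    simp_rw [map_sum, sum_mul_sum]
    rw [sum_comm]
    refine sum_congr rfl fun x _ => ?_
    rw [sum_comm]
    refine sum_congr rfl fun y _ => ?_
    rw [mul_sum]
    refine sum_congr rfl fun u _ => ?_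
    rw [map_mul]
    ring
  calc ‖∑ u, (∑ x, χ (u - x) * f x) * conj (∑ y, χ (c * u - y) * g y)‖
      ≤ ∑ x, ∑ y, ‖f x * conj (g y) * ∑ u, χ (u - x) * conj (χ (c * u - y))‖ := by
        rw [hexpand]
        exact (norm_sum_le _ _).trans (sum_le_sum fun x _ => norm_sum_le _ _)
    _ ≤ ∑ x : F, ∑ y : F, (1 + if y = c * x then (Fintype.card F : ℝ) else 0) := by
        refine sum_le_sum fun x _ => sum_le_sum fun y _ => ?_
        rw [norm_mul, norm_mul, RCLike.norm_conj]
        refine (mul_le_of_le_one_left (norm_nonneg _)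
          (mul_le_one₀ (hf x) (norm_nonneg _) (hg y))).trans ?_
        refine (χ.norm_sum_apply_sub_mul_conj_apply_mul_sub_le hχ hc x y).trans ?_
        split_ifs <;> simp
    _ = 2 * (Fintype.card F : ℝ) ^ 2 := by
        simp only [sum_add_distrib, sum_ite_eq', mem_univ, if_true, sum_const, card_univ,
          nsmul_eq_mul]
        ring

end FiniteField

theorem norm_eZMod (p : ℕ) (x : ZMod p) : ‖eZMod p x‖ = 1 := by
  have h : 2 * Real.pi * Complex.I * (x.val : ℂ) / (p : ℂ)
      = ((2 * Real.pi * x.val / p : ℝ) : ℂ) * Complex.I := by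
    push_cast; ring
  rw [eZMod, h, Complex.norm_exp_ofReal_mul_I]

theorem Ssum_eq_sum_apply_sub_mul {p : ℕ} [Fact p.Prime] (χ : DirichletCharacter ℂ p)
    (a : (ZMod p)ˣ) (u : ZMod p) :
    Ssum p χ a u = ∑ x, χ (u - x) * if x = 0 then 0 else eZMod p ((a : ZMod p) * x⁻¹) := by
  rw [Ssum, sum_filter]
  refine Fintype.sum_equiv (Equiv.subLeft u) _ _ fun b => ?_
  rcases eq_or_ne b u with rfl | hb
  · simp
  · simp [hb, hb.symm, sub_eq_zero]

/-- The twisted correlation bound: there is an absolute constant `C > 0` such that for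
every prime `p`, nontrivial `χ` mod `p` and units `a, a′, c`,
`|Σ_u S(a,u) · conj(S(a′, c·u))| ≤ C · p²`. -/
theorem stmt_4 :
    ∃ C : ℝ, 0 < C ∧ ∀ (p : ℕ) (_ : Fact p.Prime)
      (χ : DirichletCharacter ℂ p), χ ≠ 1 → ∀ (a a' c : (ZMod p)ˣ),
      ‖∑ u : ZMod p, Ssum p χ a u *
          (starRingEnd ℂ) (Ssum p χ a' ((c : ZMod p) * u))‖ ≤ C * (p : ℝ) ^ 2 := by
  refine ⟨2, two_pos, fun p _ χ hχ a a' c => ?_⟩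
  have hweight : ∀ (a : (ZMod p)ˣ) (x : ZMod p),
      ‖if x = 0 then 0 else eZMod p ((a : ZMod p) * x⁻¹)‖ ≤ 1 := fun a x => by
    split_ifs
    · simp
    · exact (norm_eZMod p _).le
  simp only [Ssum_eq_sum_apply_sub_mul]
  simpa [ZMod.card] using χ.norm_sum_mul_conj_le hχ c.ne_zero _ _ (hweight a) (hweight a')
end
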